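/- Fix integers a₁ ≥ 2 and K ≥ 1, and let S = {0, a₁, 2a₁, …, (K−1)·a₁} ∪ {n ∈ ℕ : n ≥ K·a₁}, which is the numerical semigroup minimally generated by the d = a₁ integers a₁ and K·a₁ + (i − 1) for i = 2, …, a₁. Then the equality F + 1 = d·(F + 1 − g) holds, where F is the Frobenius number of S and g its genus. -/

import Mathlib

/-!
Below `K * a` the semigroup contains only the `K` multiples `0, a, …, (K - 1) * a`, and it
contains everything from `K * a` on. Hence `F = K * a - 1` and `g = K * a - K`, so that
`F + 1 = K * a = a * (F + 1 - g)`.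
-/

open Finset

/-- The numerical semigroup generated by `a, K * a, K * a + 1, …, K * a + a - 1`. -/
def multiplesBelowThenAll (a K : ℕ) : Set ℕ :=
  {m | (∃ j < K, m = j * a) ∨ K * a ≤ m}

namespace multiplesBelowThenAll

variable {a K : ℕ}

theorem isGreatest_compl (ha : 2 ≤ a) (hK : 1 ≤ K) :
    IsGreatest (multiplesBelowThenAll a K)ᶜ (K * a - 1) := by
  have hKa : K ≤ K * a := Nat.le_mul_of_pos_right K (by omega)
  refine ⟨?_, fun m hm => ?_⟩
  · rintro (⟨j, hj, hje⟩ | h)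
    · have : (j + 1) * a ≤ K * a := Nat.mul_le_mul_right a hj
      rw [add_mul, one_mul] at this
      omega
    · omega
  · by_contra! h
    exact hm (Or.inr (by omega))

theorem compl_eq :
    (multiplesBelowThenAll a K)ᶜ = ↑(range (K * a) \ (range K).image (· * a)) := by
  ext m
  simp only [multiplesBelowThenAll, Set.mem_compl_iff, Set.mem_ofPred_eq, coe_sdiff, coe_image,
    coe_range, Set.mem_sdiff, Set.mem_Iio, Set.mem_image, not_or, not_le]
  constructor
  · rintro ⟨hmul, hlt⟩
    exact ⟨hlt, fun ⟨j, hj, hje⟩ => hmul ⟨j, hj, hje.symm⟩⟩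
  · rintro ⟨hlt, hmul⟩
    exact ⟨fun ⟨j, hj, hje⟩ => hmul ⟨j, hj, hje.symm⟩, hlt⟩

theorem ncard_compl (ha : 0 < a) :
    (multiplesBelowThenAll a K)ᶜ.ncard = K * a - K := by
  have hsub : (range K).image (· * a) ⊆ range (K * a) := by
    simp only [subset_iff, mem_image, mem_range, forall_exists_index, and_imp]
    rintro _ j hj rfl
    exact Nat.mul_lt_mul_of_pos_right hj ha
  rw [compl_eq, Set.ncard_coe_finset, card_sdiff_of_subset hsub,
    card_image_of_injective _ (mul_left_injective₀ ha.ne'), card_range, card_range]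

end multiplesBelowThenAll

theorem stmt11
    (a1 K : ℕ) (ha1 : 2 ≤ a1) (hK : 1 ≤ K)
    (S : Set ℕ)
    (hS : S = {m : ℕ | (∃ j < K, m = j * a1) ∨ K * a1 ≤ m})
    (d : ℕ) (hd : d = a1)
    (F : ℕ) (hF : F ∉ S) (hFmax : ∀ m : ℕ, F < m → m ∈ S)
    (g : ℕ) (hg : g = {m : ℕ | m ∉ S}.ncard)
    :
    (F : ℤ) + 1 = (d : ℤ) * ((F : ℤ) + 1 - (g : ℤ)) := by
  change S = multiplesBelowThenAll a1 K at hS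
  subst hS
  have hF_greatest : IsGreatest (multiplesBelowThenAll a1 K)ᶜ F :=
    ⟨hF, fun m hm => not_lt.1 fun hlt => hm (hFmax m hlt)⟩
  have hF_eq : F = K * a1 - 1 :=
    hF_greatest.unique (multiplesBelowThenAll.isGreatest_compl ha1 hK)
  have hg_eq : g = K * a1 - K := hg.trans (multiplesBelowThenAll.ncard_compl (by omega))
  have hKa : K ≤ K * a1 := Nat.le_mul_of_pos_right K (by omega)
  have hKa_pos : 1 ≤ K * a1 := hK.trans hKa
  rw [hF_eq, hg_eq, hd]
  push_cast [Nat.cast_sub hKa, Nat.cast_sub hKa_pos]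
  ring
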